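/- Lemma 6 (third identification equation): under the outcome model, the treatment model, IV independence, and the orthogonality conditions (Assumption 2(c), unconditional form), it holds that Cov(B·(B − E[B]), (A − E[A|B])·Y) = Cov(B·(B − E[B]), A·(A − E[A|B]))·E[ϑ_a(V)] + Cov(B·(B − E[B]), A·B·(A − E[A|B]))·E[ϑ_az(V)]. -/

import Mathlib

/-!
Write `M = E[A | B]` and `W = B (B - E B)`. Conditioning on `(V, A, B)` replaces `Y` by its
regression, and `(A - M) E[Y | V, A, B]` splits as
`ϑa(V) A (A - M) + ϑz(V) B (A - M) + ϑaz(V) A B (A - M) + ϑu(V) (A - M)`.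
Since `A² = A`, each factor next to a `ϑ(V)` has the form `g₁ A + g₀` with `g₀, g₁` functions of
`B`. Conditioning on `(B, V)` and the independence of `B` and `V` give
`E[f(V) (g₁ A + g₀)] = E[f αz] E[g₁ B] + E[f αu] E[g₁] + E[f] E[g₀]`, so a `ϑ` uncorrelated with
`αz` and `αu` comes out of `Cov(W, ϑ(V) X)` as the factor `E[ϑ(V)]`. The `ϑz` term vanishes
because `A - M` is orthogonal to every function of `B`, and the `ϑu` term equals
`Cov(ϑu, αz) Cov(W, B) = 0`.
-/

open MeasureTheory ProbabilityTheory

/-- Covariance of two real random variables: `Cov(X,Z) = E[XZ] - E[X]·E[Z]`. -/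
noncomputable def covE {Ω : Type*} [MeasurableSpace Ω] (μ : Measure Ω) (X Z : Ω → ℝ) : ℝ :=
  (∫ ω, X ω * Z ω ∂μ) - (∫ ω, X ω ∂μ) * (∫ ω, Z ω ∂μ)

open scoped ENNReal

section Bounded

variable {Ω : Type*} {mΩ : MeasurableSpace Ω} {μ : Measure Ω}

lemma MeasureTheory.MemLp.mul_of_top {f g : Ω → ℝ} (hf : MemLp f ∞ μ) (hg : MemLp g ∞ μ) :
    MemLp (fun ω => f ω * g ω) ∞ μ :=
  hg.mul' hf

lemma MeasureTheory.MemLp.integrable_mul_of_top [IsFiniteMeasure μ] {f g : Ω → ℝ}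
    (hf : MemLp f ∞ μ) (hg : MemLp g ∞ μ) : Integrable (fun ω => f ω * g ω) μ :=
  (hf.mul_of_top hg).integrable le_top

lemma memLp_top_comp_of_abs_le {𝒱 : Type*} [MeasurableSpace 𝒱] {V : Ω → 𝒱} (hV : Measurable V)
    {f : 𝒱 → ℝ} (hf : Measurable f) (hb : ∃ C, ∀ x, |f x| ≤ C) : MemLp (fun ω => f (V ω)) ∞ μ := by
  obtain ⟨C, hC⟩ := hb
  exact memLp_top_of_bound (hf.comp hV).aestronglyMeasurable C (.of_forall fun ω => hC (V ω))

lemma memLp_top_of_forall_eq_zero_or_one {X : Ω → ℝ} (hX : Measurable X)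
    (h01 : ∀ ω, X ω = 0 ∨ X ω = 1) : MemLp X ∞ μ :=
  memLp_top_of_bound hX.aestronglyMeasurable 1
    (.of_forall fun ω => by rcases h01 ω with h | h <;> simp [h])

end Bounded

section Covariance

variable {Ω : Type*} {mΩ : MeasurableSpace Ω} {μ : Measure Ω}

lemma covE_comm (X Z : Ω → ℝ) : covE μ X Z = covE μ Z X := by
  simp only [covE, mul_comm]

lemma covE_const_right [IsProbabilityMeasure μ] (W : Ω → ℝ) (c : ℝ) :
    covE μ W (fun _ => c) = 0 := by
  simp only [covE, integral_mul_const, integral_const, probReal_univ, one_smul, sub_self]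

lemma covE_add_right [IsFiniteMeasure μ] {W X Z : Ω → ℝ} (hW : MemLp W ∞ μ) (hX : MemLp X ∞ μ)
    (hZ : MemLp Z ∞ μ) :
    covE μ W (fun ω => X ω + Z ω) = covE μ W X + covE μ W Z := by
  simp only [covE, mul_add, integral_add (hW.integrable_mul_of_top hX)
    (hW.integrable_mul_of_top hZ), integral_add (hX.integrable le_top)
    (hZ.integrable le_top)]
  ring

end Covariance

section ConditionalExpectation

variable {Ω : Type*} {m mΩ : MeasurableSpace Ω} {μ : Measure Ω} [IsFiniteMeasure μ]

lemma integral_mul_condExp (hm : m ≤ mΩ) {g X : Ω → ℝ} (hg : StronglyMeasurable[m] g)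
    (hgb : MemLp g ∞ μ) (hX : Integrable X μ) :
    ∫ ω, g ω * (μ[X|m]) ω ∂μ = ∫ ω, g ω * X ω ∂μ := by
  calc ∫ ω, g ω * (μ[X|m]) ω ∂μ = ∫ ω, (μ[g * X|m]) ω ∂μ :=
        integral_congr_ae (condExp_mul_of_stronglyMeasurable_left hg
          (hX.mul_of_top_right hgb) hX).symm
    _ = ∫ ω, g ω * X ω ∂μ := integral_condExp hm

lemma integral_mul_sub_condExp (hm : m ≤ mΩ) {g X : Ω → ℝ} (hg : StronglyMeasurable[m] g)
    (hgb : MemLp g ∞ μ) (hX : Integrable X μ) :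
    ∫ ω, g ω * (X ω - (μ[X|m]) ω) ∂μ = 0 := by
  have hgX : Integrable (fun ω => g ω * X ω) μ := hX.mul_of_top_right hgb
  have hgM : Integrable (fun ω => g ω * (μ[X|m]) ω) μ := integrable_condExp.mul_of_top_right hgb
  simp only [mul_sub]
  rw [integral_sub hgX hgM, integral_mul_condExp hm hg hgb hX, sub_self]

lemma covE_mul_sub_condExp (hm : m ≤ mΩ) {W g X : Ω → ℝ} (hW : StronglyMeasurable[m] W)
    (hWb : MemLp W ∞ μ) (hg : StronglyMeasurable[m] g) (hgb : MemLp g ∞ μ)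
    (hX : Integrable X μ) :
    covE μ W (fun ω => g ω * (X ω - (μ[X|m]) ω)) = 0 := by
  have hWg : ∫ ω, W ω * (g ω * (X ω - (μ[X|m]) ω)) ∂μ = 0 := by
    simp only [← mul_assoc]
    exact integral_mul_sub_condExp hm (hW.mul hg) (hWb.mul_of_top hgb) hX
  simp only [covE, hWg, integral_mul_sub_condExp hm hg hgb hX, mul_zero, sub_zero]

lemma covE_mul_eq_of_condExp_eq (hm : m ≤ mΩ) {W R Y Ŷ : Ω → ℝ} (hW : StronglyMeasurable[m] W)
    (hWb : MemLp W ∞ μ) (hR : StronglyMeasurable[m] R) (hRb : MemLp R ∞ μ)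
    (hY : Integrable Y μ) (hŶ : μ[Y|m] =ᵐ[μ] Ŷ) :
    covE μ W (fun ω => R ω * Y ω) = covE μ W (fun ω => R ω * Ŷ ω) := by
  have hpull : ∀ {g : Ω → ℝ}, StronglyMeasurable[m] g → MemLp g ∞ μ →
      ∫ ω, g ω * Y ω ∂μ = ∫ ω, g ω * Ŷ ω ∂μ := fun {g} hg hgb => by
    rw [← integral_mul_condExp hm hg hgb hY]
    exact integral_congr_ae (hŶ.mono fun ω hω => congrArg (g ω * ·) hω)
  simp only [covE, ← mul_assoc, hpull hR hRb,
    hpull (g := fun ω => W ω * R ω) (hW.mul hR) (hWb.mul_of_top hRb)]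

end ConditionalExpectation

lemma ProbabilityTheory.IndepFun.integral_comp_mul_eq_mul_integral {Ω 𝒱 β : Type*}
    {mΩ : MeasurableSpace Ω} [MeasurableSpace 𝒱] [MeasurableSpace β] {μ : Measure Ω}
    {V : Ω → 𝒱} {B : Ω → β}
    (hindep : IndepFun B V μ) (hV : Measurable V) (hB : Measurable B) {f : 𝒱 → ℝ}
    (hf : Measurable f) {g : Ω → ℝ}
    (hg : StronglyMeasurable[MeasurableSpace.comap B inferInstance] g) :
    ∫ ω, f (V ω) * g ω ∂μ = (∫ ω, f (V ω) ∂μ) * ∫ ω, g ω ∂μ := by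
  have hfg : IndepFun (fun ω => f (V ω)) g μ := by
    rw [IndepFun_iff_Indep] at hindep ⊢
    exact indep_of_indep_of_le_right (indep_of_indep_of_le_left hindep.symm
      (hf.comp (comap_measurable V)).comap_le) hg.measurable.comap_le
  exact hfg.integral_mul_eq_mul_integral (hf.comp hV).aestronglyMeasurable
    (hg.mono hB.comap_le).aestronglyMeasurable

/-- The treatment model of the paper together with IV independence, with boundedness recorded as
membership in `L^∞`. -/
structure IsIVTreatmentModel {Ω 𝒱 : Type*} [MeasurableSpace Ω] [MeasurableSpace 𝒱]
    (μ : Measure Ω) (V : Ω → 𝒱) (A B : Ω → ℝ) (αz αu : 𝒱 → ℝ) : Prop where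
  measurable_V : Measurable V
  measurable_B : Measurable B
  memLp_A : MemLp A ∞ μ
  memLp_B : MemLp B ∞ μ
  measurable_αz : Measurable αz
  measurable_αu : Measurable αu
  memLp_αz : MemLp (fun ω => αz (V ω)) ∞ μ
  memLp_αu : MemLp (fun ω => αu (V ω)) ∞ μ
  indepFun : IndepFun B V μ
  condExp_eq : μ[A | MeasurableSpace.comap (fun ω => (B ω, V ω)) inferInstance]
    =ᵐ[μ] fun ω => αz (V ω) * B ω + αu (V ω)

namespace IsIVTreatmentModel

variable {Ω 𝒱 : Type*} {mΩ : MeasurableSpace Ω} [MeasurableSpace 𝒱] {μ : Measure Ω}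
  [IsProbabilityMeasure μ] {V : Ω → 𝒱} {A B : Ω → ℝ} {αz αu : 𝒱 → ℝ}

lemma integral_comp_mul_affine (h : IsIVTreatmentModel μ V A B αz αu) {f : 𝒱 → ℝ}
    (hf : Measurable f) (hfb : MemLp (fun ω => f (V ω)) ∞ μ) {g₁ g₀ : Ω → ℝ}
    (hg₁ : StronglyMeasurable[MeasurableSpace.comap B inferInstance] g₁) (hg₁b : MemLp g₁ ∞ μ)
    (hg₀ : StronglyMeasurable[MeasurableSpace.comap B inferInstance] g₀) (hg₀b : MemLp g₀ ∞ μ) :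
    ∫ ω, f (V ω) * (g₁ ω * A ω + g₀ ω) ∂μ
      = (∫ ω, f (V ω) * αz (V ω) ∂μ) * (∫ ω, g₁ ω * B ω ∂μ)
        + (∫ ω, f (V ω) * αu (V ω) ∂μ) * (∫ ω, g₁ ω ∂μ)
        + (∫ ω, f (V ω) ∂μ) * ∫ ω, g₀ ω ∂μ := by
  have hBBV : Measurable[MeasurableSpace.comap (fun ω => (B ω, V ω)) inferInstance] B :=
    measurable_fst.comp (comap_measurable _)
  have hBV := hBBV.comap_le
  have hVBV : Measurable[MeasurableSpace.comap (fun ω => (B ω, V ω)) inferInstance] V :=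
    measurable_snd.comp (comap_measurable _)
  have hfg₁ : StronglyMeasurable[MeasurableSpace.comap (fun ω => (B ω, V ω)) inferInstance]
      (fun ω => f (V ω) * g₁ ω) :=
    (hf.comp hVBV).stronglyMeasurable.mul (hg₁.mono hBV)
  have hfg₁b : MemLp (fun ω => f (V ω) * g₁ ω) ∞ μ := hfb.mul_of_top hg₁b
  have hindep {f' : 𝒱 → ℝ} (hf' : Measurable f') {g : Ω → ℝ}
      (hg : StronglyMeasurable[MeasurableSpace.comap B inferInstance] g) :=
    h.indepFun.integral_comp_mul_eq_mul_integral h.measurable_V h.measurable_B hf' hg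
  have hA : ∫ ω, f (V ω) * g₁ ω * A ω ∂μ
      = ∫ ω, f (V ω) * αz (V ω) * (g₁ ω * B ω) + f (V ω) * αu (V ω) * g₁ ω ∂μ := by
    rw [← integral_mul_condExp (h.measurable_B.prodMk h.measurable_V).comap_le hfg₁ hfg₁b
      (h.memLp_A.integrable le_top)]
    exact integral_congr_ae (h.condExp_eq.mono fun ω hω =>
      (congrArg (f (V ω) * g₁ ω * ·) hω).trans (by ring))
  have hαz : MemLp (fun ω => f (V ω) * αz (V ω)) ∞ μ := hfb.mul_of_top h.memLp_αz
  have hαu : MemLp (fun ω => f (V ω) * αu (V ω)) ∞ μ := hfb.mul_of_top h.memLp_αu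
  rw [integral_add (hαz.integrable_mul_of_top (hg₁b.mul_of_top h.memLp_B))
      (hαu.integrable_mul_of_top hg₁b),
    hindep (f' := fun x => f x * αz x) (hf.mul h.measurable_αz)
      (g := fun ω => g₁ ω * B ω) (hg₁.mul (comap_measurable B).stronglyMeasurable),
    hindep (f' := fun x => f x * αu x) (hf.mul h.measurable_αu) hg₁] at hA
  simp only [mul_add, ← mul_assoc]
  rw [integral_add (hfg₁b.integrable_mul_of_top h.memLp_A) (hfb.integrable_mul_of_top hg₀b), hA,
    hindep hf hg₀]

lemma covE_comp_mul_affine (h : IsIVTreatmentModel μ V A B αz αu) {f : 𝒱 → ℝ}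
    (hf : Measurable f) (hfb : MemLp (fun ω => f (V ω)) ∞ μ) {W g₁ g₀ : Ω → ℝ}
    (hW : StronglyMeasurable[MeasurableSpace.comap B inferInstance] W) (hWb : MemLp W ∞ μ)
    (hg₁ : StronglyMeasurable[MeasurableSpace.comap B inferInstance] g₁) (hg₁b : MemLp g₁ ∞ μ)
    (hg₀ : StronglyMeasurable[MeasurableSpace.comap B inferInstance] g₀) (hg₀b : MemLp g₀ ∞ μ) :
    covE μ W (fun ω => f (V ω) * (g₁ ω * A ω + g₀ ω))
      = (∫ ω, f (V ω) * αz (V ω) ∂μ) * covE μ W (fun ω => g₁ ω * B ω)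
        + (∫ ω, f (V ω) * αu (V ω) ∂μ) * covE μ W g₁
        + (∫ ω, f (V ω) ∂μ) * covE μ W g₀ := by
  have hWX : ∫ ω, W ω * (f (V ω) * (g₁ ω * A ω + g₀ ω)) ∂μ
      = ∫ ω, f (V ω) * ((W ω * g₁ ω) * A ω + W ω * g₀ ω) ∂μ :=
    integral_congr_ae (.of_forall fun ω => by ring)
  simp only [covE]
  rw [hWX, h.integral_comp_mul_affine (g₁ := fun ω => W ω * g₁ ω) (g₀ := fun ω => W ω * g₀ ω)
    hf hfb (hW.mul hg₁) (hWb.mul_of_top hg₁b) (hW.mul hg₀)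
    (hWb.mul_of_top hg₀b), h.integral_comp_mul_affine hf hfb hg₁ hg₁b hg₀ hg₀b]
  simp only [mul_assoc]
  ring

lemma covE_comp_mul_of_covE_eq_zero (h : IsIVTreatmentModel μ V A B αz αu) {f : 𝒱 → ℝ}
    (hf : Measurable f) (hfb : MemLp (fun ω => f (V ω)) ∞ μ)
    (hfαz : covE μ (fun ω => f (V ω)) (fun ω => αz (V ω)) = 0)
    (hfαu : covE μ (fun ω => f (V ω)) (fun ω => αu (V ω)) = 0) {W X g₁ g₀ : Ω → ℝ}
    (hW : StronglyMeasurable[MeasurableSpace.comap B inferInstance] W) (hWb : MemLp W ∞ μ)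
    (hg₁ : StronglyMeasurable[MeasurableSpace.comap B inferInstance] g₁) (hg₁b : MemLp g₁ ∞ μ)
    (hg₀ : StronglyMeasurable[MeasurableSpace.comap B inferInstance] g₀) (hg₀b : MemLp g₀ ∞ μ)
    (hX : ∀ ω, X ω = g₁ ω * A ω + g₀ ω) :
    covE μ W (fun ω => f (V ω) * X ω) = (∫ ω, f (V ω) ∂μ) * covE μ W X := by
  obtain rfl : X = fun ω => g₁ ω * A ω + g₀ ω := funext hX
  have hone := h.covE_comp_mul_affine measurable_const (memLp_const 1) hW hWb hg₁ hg₁b hg₀ hg₀b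
  simp only [one_mul, integral_const, probReal_univ, one_smul] at hone
  rw [h.covE_comp_mul_affine hf hfb hW hWb hg₁ hg₁b hg₀ hg₀b, hone,
    sub_eq_zero.1 hfαz, sub_eq_zero.1 hfαu]
  ring

lemma covE_comp_mul_sub_condExp (h : IsIVTreatmentModel μ V A B αz αu) {f : 𝒱 → ℝ}
    (hf : Measurable f) (hfb : MemLp (fun ω => f (V ω)) ∞ μ) {W : Ω → ℝ}
    (hW : StronglyMeasurable[MeasurableSpace.comap B inferInstance] W) (hWb : MemLp W ∞ μ) :
    covE μ W (fun ω => f (V ω) * (A ω - (μ[A | MeasurableSpace.comap B inferInstance]) ω))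
      = covE μ (fun ω => f (V ω)) (fun ω => αz (V ω)) * covE μ W B := by
  set M := μ[A | MeasurableSpace.comap B inferInstance]
  have hM : StronglyMeasurable[MeasurableSpace.comap B inferInstance] (fun ω => -M ω) :=
    stronglyMeasurable_condExp.neg
  have hMb : MemLp (fun ω => -M ω) ∞ μ := (h.memLp_A.condExp le_top).neg
  have hsub : ∀ ω, A ω - M ω = (fun _ => (1 : ℝ)) ω * A ω + -M ω := fun ω => by ring
  -- For `f = 1` the left side vanishes, which gives `Cov(W, -M) = -E[αz] Cov(W, B)`.
  have hzero : covE μ W (fun ω => 1 * (A ω - M ω)) = 0 :=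
    covE_mul_sub_condExp h.measurable_B.comap_le hW hWb stronglyMeasurable_const
      (memLp_const 1) (h.memLp_A.integrable le_top)
  simp only [hsub] at hzero ⊢
  rw [h.covE_comp_mul_affine hf hfb hW hWb stronglyMeasurable_const (memLp_const 1) hM hMb]
  rw [h.covE_comp_mul_affine measurable_const (memLp_const 1) hW hWb stronglyMeasurable_const
    (memLp_const 1) hM hMb] at hzero
  simp only [one_mul, covE_const_right, integral_const, probReal_univ, one_smul] at hzero ⊢
  simp only [covE] at hzero ⊢
  linear_combination (∫ ω, f (V ω) ∂μ) * hzero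

theorem covE_sub_condExp_mul_treatment_part (h : IsIVTreatmentModel μ V A B αz αu)
    (hA01 : ∀ ω, A ω = 0 ∨ A ω = 1) {ϑa ϑaz : 𝒱 → ℝ} (hϑam : Measurable ϑa)
    (hϑazm : Measurable ϑaz) (hϑa : MemLp (fun ω => ϑa (V ω)) ∞ μ)
    (hϑaz : MemLp (fun ω => ϑaz (V ω)) ∞ μ)
    (horth1 : covE μ (fun ω => ϑa (V ω)) (fun ω => αz (V ω)) = 0)
    (horth2 : covE μ (fun ω => ϑa (V ω)) (fun ω => αu (V ω)) = 0)
    (horth5 : covE μ (fun ω => ϑaz (V ω)) (fun ω => αz (V ω)) = 0)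
    (horth6 : covE μ (fun ω => ϑaz (V ω)) (fun ω => αu (V ω)) = 0) {W : Ω → ℝ}
    (hW : StronglyMeasurable[MeasurableSpace.comap B inferInstance] W) (hWb : MemLp W ∞ μ) :
    covE μ W (fun ω => (A ω - (μ[A | MeasurableSpace.comap B inferInstance]) ω)
        * (ϑa (V ω) * A ω + ϑaz (V ω) * A ω * B ω))
      = covE μ W (fun ω => A ω * (A ω - (μ[A | MeasurableSpace.comap B inferInstance]) ω))
          * (∫ ω, ϑa (V ω) ∂μ)
        + covE μ W (fun ω => A ω * B ω * (A ω - (μ[A | MeasurableSpace.comap B inferInstance]) ω))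
          * (∫ ω, ϑaz (V ω) ∂μ) := by
  set M := μ[A | MeasurableSpace.comap B inferInstance]
  have hM : StronglyMeasurable[MeasurableSpace.comap B inferInstance] M :=
    stronglyMeasurable_condExp
  have hMb : MemLp M ∞ μ := h.memLp_A.condExp le_top
  have hB : StronglyMeasurable[MeasurableSpace.comap B inferInstance] B :=
    (comap_measurable B).stronglyMeasurable
  have hR : MemLp (fun ω => A ω - M ω) ∞ μ := h.memLp_A.sub hMb
  have hsplit : ∀ ω, (A ω - M ω) * (ϑa (V ω) * A ω + ϑaz (V ω) * A ω * B ω)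
      = ϑa (V ω) * (A ω * (A ω - M ω)) + ϑaz (V ω) * (A ω * B ω * (A ω - M ω)) :=
    fun ω => by ring
  simp only [hsplit]
  rw [covE_add_right hWb (hϑa.mul_of_top (h.memLp_A.mul_of_top hR))
      (hϑaz.mul_of_top ((h.memLp_A.mul_of_top h.memLp_B).mul_of_top hR)),
    h.covE_comp_mul_of_covE_eq_zero hϑam hϑa horth1 horth2 hW hWb
      (X := fun ω => A ω * (A ω - M ω)) (g₁ := fun ω => 1 - M ω) (g₀ := fun _ => 0)
      (stronglyMeasurable_const.sub hM) ((memLp_const 1).sub hMb) stronglyMeasurable_const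
      (memLp_const 0) (fun ω => by rcases hA01 ω with hω | hω <;> rw [hω] <;> ring),
    h.covE_comp_mul_of_covE_eq_zero hϑazm hϑaz horth5 horth6 hW hWb
      (X := fun ω => A ω * B ω * (A ω - M ω)) (g₁ := fun ω => B ω * (1 - M ω))
      (g₀ := fun _ => 0) (hB.mul (stronglyMeasurable_const.sub hM))
      (h.memLp_B.mul_of_top ((memLp_const 1).sub hMb)) stronglyMeasurable_const (memLp_const 0)
      (fun ω => by rcases hA01 ω with hω | hω <;> rw [hω] <;> ring)]
  ring

theorem covE_sub_condExp_mul_instrument_part_eq_zero (h : IsIVTreatmentModel μ V A B αz αu)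
    {ϑz ϑu : 𝒱 → ℝ} (hϑzm : Measurable ϑz) (hϑum : Measurable ϑu)
    (hϑz : MemLp (fun ω => ϑz (V ω)) ∞ μ) (hϑu : MemLp (fun ω => ϑu (V ω)) ∞ μ)
    (horth3 : covE μ (fun ω => ϑz (V ω)) (fun ω => αz (V ω)) = 0)
    (horth4 : covE μ (fun ω => ϑz (V ω)) (fun ω => αu (V ω)) = 0)
    (horth7 : covE μ (fun ω => αz (V ω)) (fun ω => ϑu (V ω)) = 0) {W : Ω → ℝ}
    (hW : StronglyMeasurable[MeasurableSpace.comap B inferInstance] W) (hWb : MemLp W ∞ μ) :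
    covE μ W (fun ω => (A ω - (μ[A | MeasurableSpace.comap B inferInstance]) ω)
        * (ϑz (V ω) * B ω + ϑu (V ω))) = 0 := by
  set M := μ[A | MeasurableSpace.comap B inferInstance]
  have hM : StronglyMeasurable[MeasurableSpace.comap B inferInstance] M :=
    stronglyMeasurable_condExp
  have hMb : MemLp M ∞ μ := h.memLp_A.condExp le_top
  have hB : StronglyMeasurable[MeasurableSpace.comap B inferInstance] B :=
    (comap_measurable B).stronglyMeasurable
  have hR : MemLp (fun ω => A ω - M ω) ∞ μ := h.memLp_A.sub hMb
  have hsplit : ∀ ω, (A ω - M ω) * (ϑz (V ω) * B ω + ϑu (V ω))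
      = ϑz (V ω) * (B ω * (A ω - M ω)) + ϑu (V ω) * (A ω - M ω) := fun ω => by ring
  simp only [hsplit]
  rw [covE_add_right hWb (hϑz.mul_of_top (h.memLp_B.mul_of_top hR)) (hϑu.mul_of_top hR),
    h.covE_comp_mul_of_covE_eq_zero hϑzm hϑz horth3 horth4 hW hWb
      (X := fun ω => B ω * (A ω - M ω)) (g₀ := fun ω => -(B ω * M ω)) hB h.memLp_B
      (hB.mul hM).neg (h.memLp_B.mul_of_top hMb).neg (fun ω => by ring),
    covE_mul_sub_condExp h.measurable_B.comap_le hW hWb hB h.memLp_B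
      (h.memLp_A.integrable le_top),
    h.covE_comp_mul_sub_condExp hϑum hϑu hW hWb, covE_comm (fun ω => ϑu (V ω)), horth7]
  ring

theorem covE_sub_condExp_mul_outcome (h : IsIVTreatmentModel μ V A B αz αu)
    (hA01 : ∀ ω, A ω = 0 ∨ A ω = 1) {ϑa ϑz ϑaz ϑu : 𝒱 → ℝ}
    (hϑam : Measurable ϑa) (hϑzm : Measurable ϑz) (hϑazm : Measurable ϑaz)
    (hϑum : Measurable ϑu) (hϑa : MemLp (fun ω => ϑa (V ω)) ∞ μ)
    (hϑz : MemLp (fun ω => ϑz (V ω)) ∞ μ) (hϑaz : MemLp (fun ω => ϑaz (V ω)) ∞ μ)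
    (hϑu : MemLp (fun ω => ϑu (V ω)) ∞ μ)
    (horth1 : covE μ (fun ω => ϑa (V ω)) (fun ω => αz (V ω)) = 0)
    (horth2 : covE μ (fun ω => ϑa (V ω)) (fun ω => αu (V ω)) = 0)
    (horth3 : covE μ (fun ω => ϑz (V ω)) (fun ω => αz (V ω)) = 0)
    (horth4 : covE μ (fun ω => ϑz (V ω)) (fun ω => αu (V ω)) = 0)
    (horth5 : covE μ (fun ω => ϑaz (V ω)) (fun ω => αz (V ω)) = 0)
    (horth6 : covE μ (fun ω => ϑaz (V ω)) (fun ω => αu (V ω)) = 0)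
    (horth7 : covE μ (fun ω => αz (V ω)) (fun ω => ϑu (V ω)) = 0) {W : Ω → ℝ}
    (hW : StronglyMeasurable[MeasurableSpace.comap B inferInstance] W) (hWb : MemLp W ∞ μ) :
    covE μ W (fun ω => (A ω - (μ[A | MeasurableSpace.comap B inferInstance]) ω)
        * (ϑa (V ω) * A ω + ϑz (V ω) * B ω + ϑaz (V ω) * A ω * B ω + ϑu (V ω)))
      = covE μ W (fun ω => A ω * (A ω - (μ[A | MeasurableSpace.comap B inferInstance]) ω))
          * (∫ ω, ϑa (V ω) ∂μ)
        + covE μ W (fun ω => A ω * B ω * (A ω - (μ[A | MeasurableSpace.comap B inferInstance]) ω))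
          * (∫ ω, ϑaz (V ω) ∂μ) := by
  set M := μ[A | MeasurableSpace.comap B inferInstance]
  have hR : MemLp (fun ω => A ω - M ω) ∞ μ := h.memLp_A.sub (h.memLp_A.condExp le_top)
  have htreat : MemLp (fun ω => (A ω - M ω) * (ϑa (V ω) * A ω + ϑaz (V ω) * A ω * B ω)) ∞ μ :=
    hR.mul_of_top ((hϑa.mul_of_top h.memLp_A).add
      ((hϑaz.mul_of_top h.memLp_A).mul_of_top h.memLp_B))
  have hinstr : MemLp (fun ω => (A ω - M ω) * (ϑz (V ω) * B ω + ϑu (V ω))) ∞ μ :=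
    hR.mul_of_top ((hϑz.mul_of_top h.memLp_B).add hϑu)
  have hsplit : ∀ ω, (A ω - M ω) * (ϑa (V ω) * A ω + ϑz (V ω) * B ω + ϑaz (V ω) * A ω * B ω
      + ϑu (V ω)) = (A ω - M ω) * (ϑa (V ω) * A ω + ϑaz (V ω) * A ω * B ω)
        + (A ω - M ω) * (ϑz (V ω) * B ω + ϑu (V ω)) := fun ω => by ring
  simp only [hsplit]
  rw [covE_add_right hWb htreat hinstr,
    h.covE_sub_condExp_mul_treatment_part hA01 hϑam hϑazm hϑa hϑaz horth1 horth2 horth5 horth6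
      hW hWb,
    h.covE_sub_condExp_mul_instrument_part_eq_zero hϑzm hϑum hϑz hϑu horth3 horth4 horth7 hW hWb,
    add_zero]

end IsIVTreatmentModel

/-- Lemma 6 (third identification equation):
`Cov(B·(B − E[B]), (A − E[A|B])·Y)
  = Cov(B·(B − E[B]), A·(A − E[A|B]))·E[ϑ_a(V)]
    + Cov(B·(B − E[B]), A·B·(A − E[A|B]))·E[ϑ_az(V)]`. -/
theorem lemma6_third_identification_equation
    {Ω 𝒱 : Type*} [MeasurableSpace Ω] [MeasurableSpace 𝒱]
    (μ : Measure Ω) [IsProbabilityMeasure μ]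
    (V : Ω → 𝒱) (A B : Ω → ℝ)
    (hV : Measurable V) (hA : Measurable A) (hB : Measurable B)
    (hA01 : ∀ ω, A ω = 0 ∨ A ω = 1) (hB01 : ∀ ω, B ω = 0 ∨ B ω = 1)
    (αz αu : 𝒱 → ℝ) (hαzm : Measurable αz) (hαum : Measurable αu)
    (hαzb : ∃ C, ∀ x, |αz x| ≤ C) (hαub : ∃ C, ∀ x, |αu x| ≤ C)
    (htreat : μ[A | MeasurableSpace.comap (fun ω => (B ω, V ω)) inferInstance]
        =ᵐ[μ] fun ω => αz (V ω) * B ω + αu (V ω))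
    (hindep : IndepFun B V μ)
    (Y : Ω → ℝ) (hY : Integrable Y μ)
    (ϑa ϑz ϑaz ϑu : 𝒱 → ℝ)
    (hϑam : Measurable ϑa) (hϑzm : Measurable ϑz)
    (hϑazm : Measurable ϑaz) (hϑum : Measurable ϑu)
    (hϑab : ∃ C, ∀ x, |ϑa x| ≤ C) (hϑzb : ∃ C, ∀ x, |ϑz x| ≤ C)
    (hϑazb : ∃ C, ∀ x, |ϑaz x| ≤ C) (hϑub : ∃ C, ∀ x, |ϑu x| ≤ C)
    (houtcome : μ[Y | MeasurableSpace.comap (fun ω => (V ω, A ω, B ω)) inferInstance]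
        =ᵐ[μ] fun ω => ϑa (V ω) * A ω + ϑz (V ω) * B ω + ϑaz (V ω) * A ω * B ω + ϑu (V ω))
    (horth1 : covE μ (fun x => ϑa (V x)) (fun x => αz (V x)) = 0)
    (horth2 : covE μ (fun x => ϑa (V x)) (fun x => αu (V x)) = 0)
    (horth3 : covE μ (fun x => ϑz (V x)) (fun x => αz (V x)) = 0)
    (horth4 : covE μ (fun x => ϑz (V x)) (fun x => αu (V x)) = 0)
    (horth5 : covE μ (fun x => ϑaz (V x)) (fun x => αz (V x)) = 0)
    (horth6 : covE μ (fun x => ϑaz (V x)) (fun x => αu (V x)) = 0)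
    (horth7 : covE μ (fun x => αz (V x)) (fun x => ϑu (V x)) = 0)
    :
    covE μ (fun ω => B ω * (B ω - ∫ x, B x ∂μ))
        (fun ω => (A ω - (μ[A | MeasurableSpace.comap B inferInstance]) ω) * Y ω)
      = covE μ (fun ω => B ω * (B ω - ∫ x, B x ∂μ))
            (fun ω => A ω * (A ω - (μ[A | MeasurableSpace.comap B inferInstance]) ω))
          * (∫ ω, ϑa (V ω) ∂μ)
        + covE μ (fun ω => B ω * (B ω - ∫ x, B x ∂μ))
            (fun ω => A ω * B ω * (A ω - (μ[A | MeasurableSpace.comap B inferInstance]) ω))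
          * (∫ ω, ϑaz (V ω) ∂μ) := by
  have hAb := memLp_top_of_forall_eq_zero_or_one (μ := μ) hA hA01
  have hBb := memLp_top_of_forall_eq_zero_or_one (μ := μ) hB hB01
  have h : IsIVTreatmentModel μ V A B αz αu := ⟨hV, hB, hAb, hBb, hαzm, hαum,
    memLp_top_comp_of_abs_le hV hαzm hαzb, memLp_top_comp_of_abs_le hV hαum hαub, hindep, htreat⟩
  have hB𝓑 : Measurable[MeasurableSpace.comap B inferInstance] B := comap_measurable B
  have hW : StronglyMeasurable[MeasurableSpace.comap B inferInstance]
      (fun ω => B ω * (B ω - ∫ x, B x ∂μ)) :=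
    hB𝓑.stronglyMeasurable.mul (hB𝓑.stronglyMeasurable.sub stronglyMeasurable_const)
  have hWb : MemLp (fun ω => B ω * (B ω - ∫ x, B x ∂μ)) ∞ μ :=
    hBb.mul_of_top (hBb.sub (memLp_const _))
  have hBVAB : Measurable[MeasurableSpace.comap (fun ω => (V ω, A ω, B ω)) inferInstance] B :=
    (measurable_snd.comp measurable_snd).comp (comap_measurable _)
  have hAVAB : Measurable[MeasurableSpace.comap (fun ω => (V ω, A ω, B ω)) inferInstance] A :=
    (measurable_fst.comp measurable_snd).comp (comap_measurable _)
  rw [covE_mul_eq_of_condExp_eq (hV.prodMk (hA.prodMk hB)).comap_le (hW.mono hBVAB.comap_le) hWb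
    (R := fun ω => A ω - (μ[A | MeasurableSpace.comap B inferInstance]) ω)
    (hAVAB.stronglyMeasurable.sub (stronglyMeasurable_condExp.mono hBVAB.comap_le))
    (hAb.sub (hAb.condExp le_top)) hY houtcome]
  exact h.covE_sub_condExp_mul_outcome hA01 hϑam hϑzm hϑazm hϑum
    (memLp_top_comp_of_abs_le hV hϑam hϑab) (memLp_top_comp_of_abs_le hV hϑzm hϑzb)
    (memLp_top_comp_of_abs_le hV hϑazm hϑazb) (memLp_top_comp_of_abs_le hV hϑum hϑub)
    horth1 horth2 horth3 horth4 horth5 horth6 horth7 hW hWb
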